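/- arXiv:2201.01640 — 4 statements merged into one kernel-verified Lean document; each statement's English description precedes it below -/
import Mathlib

section
/- Let m ≥ n ≥ 1 and let K_{m,n} denote the complete bipartite graph with partite sets of sizes m and n. Then mr_+^R(K_{m,n}) = mr_+^C(K_{m,n}) = m. Consequently, K_{m,n} is a frame graph in a real (or complex) inner product space of dimension d if and only if m ≤ d ≤ m + n. -/
open scoped ComplexOrder

/-- The minimum positive semidefinite rank of a simple graph `G` over the field `𝕜`
(`𝕜 = ℝ` gives `mr₊^ℝ`, `𝕜 = ℂ` gives `mr₊^ℂ`): the minimum rank over all positive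
semidefinite Hermitian matrices whose off-diagonal zero/nonzero pattern matches `G`. -/
noncomputable def mrPlus (𝕜 : Type) [RCLike 𝕜] {V : Type} [Fintype V] [DecidableEq V]
    (G : SimpleGraph V) : ℕ :=
  sInf {r : ℕ | ∃ A : Matrix V V 𝕜, A.PosSemidef ∧
    (∀ i j : V, i ≠ j → (A i j ≠ 0 ↔ G.Adj i j)) ∧ A.rank = r}

/-- `G` is a frame graph in the `d`-dimensional inner product space over `𝕜`:
there is a spanning family (frame) `f` indexed by the vertices such that distinct
vertices are adjacent iff the corresponding vectors are non-orthogonal. -/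
def IsFrameGraphIn (𝕜 : Type) [RCLike 𝕜] {V : Type} (G : SimpleGraph V) (d : ℕ) : Prop :=
  ∃ f : V → EuclideanSpace 𝕜 (Fin d),
    Submodule.span 𝕜 (Set.range f) = ⊤ ∧
    ∀ i j : V, i ≠ j → ((inner 𝕜 (f i) (f j) : 𝕜) ≠ 0 ↔ G.Adj i j)

/-- The strong product of two simple graphs. -/
def strongProd {α β : Type} (G : SimpleGraph α) (H : SimpleGraph β) :
    SimpleGraph (α × β) where
  Adj x y := (x.1 = y.1 ∧ H.Adj x.2 y.2) ∨ (x.2 = y.2 ∧ G.Adj x.1 y.1) ∨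
    (G.Adj x.1 y.1 ∧ H.Adj x.2 y.2)
  symm := by
    constructor
    rintro ⟨a, b⟩ ⟨c, d⟩ (⟨h1, h2⟩ | ⟨h1, h2⟩ | ⟨h1, h2⟩)
    · exact Or.inl ⟨h1.symm, h2.symm⟩
    · exact Or.inr (Or.inl ⟨h1.symm, h2.symm⟩)
    · exact Or.inr (Or.inr ⟨h1.symm, h2.symm⟩)
  loopless := by
    constructor
    rintro ⟨a, b⟩ (⟨_, h⟩ | ⟨_, h⟩ | ⟨h, _⟩)
    · exact H.loopless.irrefl b h
    · exact G.loopless.irrefl a h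
    · exact G.loopless.irrefl a h

/-- The join `G ∨ H` of two graphs with disjoint vertex sets. -/
def joinGraph {α β : Type} (G : SimpleGraph α) (H : SimpleGraph β) :
    SimpleGraph (α ⊕ β) where
  Adj x y := match x, y with
    | Sum.inl a, Sum.inl b => G.Adj a b
    | Sum.inr a, Sum.inr b => H.Adj a b
    | Sum.inl _, Sum.inr _ => True
    | Sum.inr _, Sum.inl _ => True
  symm := by
    constructor
    rintro (a | a) (b | b) h
    · exact h.symm
    · trivial
    · trivial
    · exact h.symm
  loopless := by
    constructor
    rintro (a | a) h
    · exact G.loopless.irrefl a h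
    · exact H.loopless.irrefl a h

/-- The vertex-sum `G · H` of `G` and `H`, obtained by identifying the vertex `a` of `G`
with the vertex `b` of `H` (and no other vertices or edges shared). -/
def vertexSum {α β : Type} (G : SimpleGraph α) (H : SimpleGraph β) (a : α) (b : β) :
    SimpleGraph (α ⊕ {y : β // y ≠ b}) where
  Adj x y := match x, y with
    | Sum.inl u, Sum.inl u' => G.Adj u u'
    | Sum.inr v, Sum.inr v' => H.Adj v.1 v'.1
    | Sum.inl u, Sum.inr v => u = a ∧ H.Adj b v.1
    | Sum.inr v, Sum.inl u => u = a ∧ H.Adj b v.1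
  symm := by
    constructor
    rintro (u | v) (u' | v') h
    · exact h.symm
    · exact h
    · exact h
    · exact h.symm
  loopless := by
    constructor
    rintro (u | v) h
    · exact G.loopless.irrefl u h
    · exact H.loopless.irrefl v.1 h

/-- The corona product `G ∘ H`: one copy of `G`, one copy of `H` for each vertex of `G`,
with every vertex of the `i`-th copy of `H` joined to the `i`-th vertex of `G`. -/
def corona {α β : Type} (G : SimpleGraph α) (H : SimpleGraph β) :
    SimpleGraph (α ⊕ α × β) where
  Adj x y := match x, y with
    | Sum.inl u, Sum.inl u' => G.Adj u u'
    | Sum.inr p, Sum.inr q => p.1 = q.1 ∧ H.Adj p.2 q.2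
    | Sum.inl u, Sum.inr p => u = p.1
    | Sum.inr p, Sum.inl u => u = p.1
  symm := by
    constructor
    rintro (u | p) (u' | q) h
    · exact h.symm
    · exact h
    · exact h
    · exact ⟨h.1.symm, h.2.symm⟩
  loopless := by
    constructor
    rintro (u | p) h
    · exact G.loopless.irrefl u h
    · exact H.loopless.irrefl p.2 h.2

/-- `v : Fin m → V` is an OS-vertex set of `G`: the vertices are distinct, and for each `k`
there is `w` adjacent to `v k`, different from all `v l` with `l ≤ k`, and non-adjacent to
every `v l` (`l < k`) lying in the connected component of `v k` in the subgraph induced by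
`{v 0, …, v k}`. -/
def IsOSSet {V : Type} (G : SimpleGraph V) {m : ℕ} (v : Fin m → V) : Prop :=
  Function.Injective v ∧
  ∀ k : Fin m, ∃ w : V,
    G.Adj (v k) w ∧
    (∀ l : Fin m, l ≤ k → w ≠ v l) ∧
    ∀ l : Fin m, (hl : l < k) →
      (G.induce {x : V | ∃ l' : Fin m, l' ≤ k ∧ x = v l'}).Reachable
        ⟨v l, ⟨l, le_of_lt hl, rfl⟩⟩ ⟨v k, ⟨k, le_refl k, rfl⟩⟩ →
      ¬ G.Adj w (v l)

/-- The OS-number of `G`: the maximum cardinality of an OS-vertex set of `G`. -/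
noncomputable def OSNumber {V : Type} (G : SimpleGraph V) : ℕ :=
  sSup {m : ℕ | ∃ v : Fin m → V, IsOSSet G v}

/-!
In a faithful orthogonal representation of `K_{m,n}` the `m` vectors of one side are pairwise
orthogonal, and nonzero because each has a neighbour; so they are linearly independent. A
positive semidefinite matrix with the pattern of `K_{m,n}` is the Gram matrix of such a
representation, so its rank is at least `m`, and a frame with graph `K_{m,n}` spans a space of
dimension at least `m` (and at most `m + n`, the number of its vectors).

Conversely, take `n ≤ m` pairwise orthogonal vectors `a j` of `𝕜^m` without zero coordinates. The
standard basis of `𝕜^m` together with the `a j`, of which `k ≤ n` are padded with distinct new unit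
vectors, is a frame with graph `K_{m,n}` in dimension `m + k`; for `k = 0` its Gram matrix has
rank `m`.
-/

open scoped InnerProductSpace

def IsFaithfulOrthogonalRep (𝕜 : Type) [RCLike 𝕜] {V E : Type} [NormedAddCommGroup E]
    [InnerProductSpace 𝕜 E] (G : SimpleGraph V) (f : V → E) : Prop :=
  ∀ i j, i ≠ j → (⟪f i, f j⟫_𝕜 ≠ 0 ↔ G.Adj i j)

namespace Matrix

variable {𝕜 : Type} [RCLike 𝕜] {n : Type} [Fintype n]

open scoped MatrixOrder in
theorem PosSemidef.exists_eq_gram [DecidableEq n] {A : Matrix n n 𝕜} (hA : A.PosSemidef) :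
    ∃ v : n → EuclideanSpace 𝕜 n, A = gram 𝕜 v := by
  obtain ⟨B, rfl⟩ := CStarAlgebra.nonneg_iff_eq_star_mul_self.mp hA.nonneg
  refine ⟨fun j ↦ WithLp.toLp 2 fun i ↦ B i j, ?_⟩
  ext i j
  simp [gram_apply, mul_apply, PiLp.inner_apply, mul_comm]

theorem rank_gram_le_finrank {E : Type} [NormedAddCommGroup E] [InnerProductSpace 𝕜 E]
    [FiniteDimensional 𝕜 E] (v : n → E) : (gram 𝕜 v).rank ≤ Module.finrank 𝕜 E := by
  rw [gram_eq_conjTranspose_mul (stdOrthonormalBasis 𝕜 E), rank_conjTranspose_mul_self]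
  exact (rank_le_card_height _).trans (Fintype.card_fin _).le

theorem card_le_rank_gram {ι E : Type} [Fintype ι] [NormedAddCommGroup E]
    [InnerProductSpace 𝕜 E] {v : n → E} {s : ι → n} (hs : LinearIndependent 𝕜 (v ∘ s)) :
    Fintype.card ι ≤ (gram 𝕜 v).rank := by
  classical
  calc Fintype.card ι = (gram 𝕜 (v ∘ s)).rank :=
        (rank_of_isUnit _ (posDef_gram_of_linearIndependent hs).isUnit).symm
    _ = ((gram 𝕜 v).submatrix s s).rank := rfl
    _ ≤ (gram 𝕜 v).rank := rank_submatrix_le _ s s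

end Matrix

section

variable {𝕜 : Type} [RCLike 𝕜] {V E : Type} [NormedAddCommGroup E] [InnerProductSpace 𝕜 E]
  {G : SimpleGraph V}

theorem IsFaithfulOrthogonalRep.linearIndependent_comp {f : V → E}
    (hf : IsFaithfulOrthogonalRep 𝕜 G f) {ι : Type} {s : ι → V} (hs : Function.Injective s)
    (hindep : ∀ a b, ¬ G.Adj (s a) (s b)) (hnbr : ∀ a, ∃ w, G.Adj (s a) w) :
    LinearIndependent 𝕜 (f ∘ s) := by
  refine linearIndependent_of_ne_zero_of_inner_eq_zero (fun a hzero ↦ ?_) fun a b hab ↦ ?_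
  · obtain ⟨w, hw⟩ := hnbr a
    have hzero : f (s a) = 0 := hzero
    exact (hf _ _ hw.ne).2 hw (by simp [hzero])
  · exact not_not.1 (mt (hf _ _ (hs.ne hab)).1 (hindep a b))

theorem card_le_rank_of_posSemidef [Fintype V] [DecidableEq V] {A : Matrix V V 𝕜}
    (hA : A.PosSemidef) (hpat : ∀ i j, i ≠ j → (A i j ≠ 0 ↔ G.Adj i j))
    {ι : Type} [Fintype ι] {s : ι → V} (hs : Function.Injective s)
    (hindep : ∀ a b, ¬ G.Adj (s a) (s b)) (hnbr : ∀ a, ∃ w, G.Adj (s a) w) :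
    Fintype.card ι ≤ A.rank := by
  obtain ⟨v, rfl⟩ := hA.exists_eq_gram
  exact Matrix.card_le_rank_gram
    ((show IsFaithfulOrthogonalRep 𝕜 G v from hpat).linearIndependent_comp hs hindep hnbr)

theorem mrPlus_eq_finrank [Fintype V] [DecidableEq V] [FiniteDimensional 𝕜 E] {f : V → E}
    (hf : IsFaithfulOrthogonalRep 𝕜 G f)
    (hrank : ∀ A : Matrix V V 𝕜, A.PosSemidef → (∀ i j, i ≠ j → (A i j ≠ 0 ↔ G.Adj i j)) →
      Module.finrank 𝕜 E ≤ A.rank) :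
    mrPlus 𝕜 G = Module.finrank 𝕜 E := by
  have hgram : (Matrix.gram 𝕜 f).rank ∈ {r : ℕ | ∃ A : Matrix V V 𝕜, A.PosSemidef ∧
      (∀ i j : V, i ≠ j → (A i j ≠ 0 ↔ G.Adj i j)) ∧ A.rank = r} :=
    ⟨_, Matrix.posSemidef_gram 𝕜 f, hf, rfl⟩
  refine le_antisymm ((Nat.sInf_le hgram).trans (Matrix.rank_gram_le_finrank f)) ?_
  refine le_csInf ⟨_, hgram⟩ ?_
  rintro r ⟨A, hA, hpat, rfl⟩
  exact hrank A hA hpat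

theorem IsFrameGraphIn.le_card [Fintype V] {d : ℕ} (h : IsFrameGraphIn 𝕜 G d) :
    d ≤ Fintype.card V := by
  obtain ⟨f, hspan, -⟩ := h
  calc d = Module.finrank 𝕜 (⊤ : Submodule 𝕜 (EuclideanSpace 𝕜 (Fin d))) := by simp
    _ = Module.finrank 𝕜 (Submodule.span 𝕜 (Set.range f)) := by rw [hspan]
    _ ≤ Fintype.card V := finrank_range_le_card f

theorem IsFrameGraphIn.card_le {d : ℕ} (h : IsFrameGraphIn 𝕜 G d) {ι : Type} [Fintype ι]
    {s : ι → V} (hs : Function.Injective s)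
    (hindep : ∀ a b, ¬ G.Adj (s a) (s b)) (hnbr : ∀ a, ∃ w, G.Adj (s a) w) :
    Fintype.card ι ≤ d := by
  obtain ⟨f, -, hf⟩ := h
  simpa using ((show IsFaithfulOrthogonalRep 𝕜 G f from hf).linearIndependent_comp hs hindep
    hnbr).fintype_card_le_finrank

theorem isFrameGraphIn_of_linearIsometryEquiv {d : ℕ} (e : E ≃ₗᵢ[𝕜] EuclideanSpace 𝕜 (Fin d))
    {f : V → E} (hspan : Submodule.span 𝕜 (Set.range f) = ⊤)
    (hf : IsFaithfulOrthogonalRep 𝕜 G f) : IsFrameGraphIn 𝕜 G d := by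
  refine ⟨e ∘ f, ?_, fun i j hij ↦ by simpa using hf i j hij⟩
  rw [Set.range_comp, ← e.coe_toLinearEquiv, ← LinearEquiv.coe_toLinearMap,
    Submodule.span_image, hspan, Submodule.map_top, LinearEquiv.range]

end

/-- The rows of `m • 1 - 2 • J` (`J` the all-ones matrix) are pairwise orthogonal, with no zero
entry unless `m = 2`; for `m = 2` a Hadamard matrix does the job. -/
theorem exists_pairwise_orthogonal_ne_zero (𝕜 : Type) [RCLike 𝕜] (m : ℕ) :
    ∃ a : Fin m → EuclideanSpace 𝕜 (Fin m),
      (∀ j i, a j i ≠ 0) ∧ Pairwise fun j k ↦ ⟪a j, a k⟫_𝕜 = 0 := by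
  by_cases hm : m = 2
  · subst hm
    refine ⟨![!₂[1, 1], !₂[1, -1]], ?_, ?_⟩
    · intro j i
      fin_cases j <;> fin_cases i <;> simp
    · intro j k hjk
      fin_cases j <;> fin_cases k <;> simp_all [PiLp.inner_apply, Fin.sum_univ_two]
  · refine ⟨fun j ↦ WithLp.toLp 2 fun i ↦ (if i = j then (m : 𝕜) else 0) - 2, ?_, ?_⟩
    · intro j i
      by_cases h : i = j
      · simpa [h, sub_eq_zero] using (by exact_mod_cast hm : (m : 𝕜) ≠ 2)
      · simp [h]
    · intro j k hjk
      simp only [PiLp.inner_apply, RCLike.inner_apply, map_sub, apply_ite (starRingEnd 𝕜),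
        map_natCast, map_zero, map_ofNat]
      simp [sub_mul, mul_sub, Finset.sum_sub_distrib, ite_mul, mul_ite, hjk]
      ring

section

variable {𝕜 : Type} [RCLike 𝕜] {V W U : Type} [Fintype V] [Fintype U]
  [DecidableEq V] [DecidableEq W] [DecidableEq U]

def bipartiteFrame (a : W → EuclideanSpace 𝕜 V) (e : U → W) :
    V ⊕ W → EuclideanSpace 𝕜 (V ⊕ U) :=
  Sum.elim (fun i ↦ EuclideanSpace.single (Sum.inl i) 1)
    fun j ↦ WithLp.toLp 2 (Sum.elim (a j) fun u ↦ if e u = j then 1 else 0)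

theorem span_range_bipartiteFrame (a : W → EuclideanSpace 𝕜 V) {e : U → W}
    (he : Function.Injective e) :
    Submodule.span 𝕜 (Set.range (bipartiteFrame a e)) = ⊤ := by
  rw [eq_top_iff, ← (EuclideanSpace.basisFun (V ⊕ U) 𝕜).toBasis.span_eq, Submodule.span_le]
  rintro _ ⟨i | u, rfl⟩
  · exact Submodule.subset_span ⟨Sum.inl i, by simp [bipartiteFrame]⟩
  · have hsingle : EuclideanSpace.single (Sum.inr u) (1 : 𝕜) =
        bipartiteFrame a e (Sum.inr (e u)) - ∑ i, a (e u) i • bipartiteFrame a e (Sum.inl i) := by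
      ext (x | x) <;> simp [bipartiteFrame, Pi.single_apply, he.eq_iff]
    rw [OrthonormalBasis.coe_toBasis, EuclideanSpace.basisFun_apply, hsingle]
    exact Submodule.sub_mem _ (Submodule.subset_span ⟨_, rfl⟩)
      (Submodule.sum_mem _ fun i _ ↦ Submodule.smul_mem _ _ (Submodule.subset_span ⟨_, rfl⟩))

theorem isFaithfulOrthogonalRep_bipartiteFrame {a : W → EuclideanSpace 𝕜 V}
    (ha : ∀ j i, a j i ≠ 0) (horth : Pairwise fun j k ↦ ⟪a j, a k⟫_𝕜 = 0) (e : U → W) :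
    IsFaithfulOrthogonalRep 𝕜 (completeBipartiteGraph V W) (bipartiteFrame a e) := by
  rintro (i | j) (i' | j') hne
  · simpa [bipartiteFrame, EuclideanSpace.inner_single_left] using hne
  · simpa [bipartiteFrame, EuclideanSpace.inner_single_left] using ha j' i
  · simpa [bipartiteFrame, EuclideanSpace.inner_single_right] using ha j i'
  · have hjj : j ≠ j' := fun h ↦ hne (congrArg Sum.inr h)
    have hdisjoint : ∀ u, (if e u = j then if e u = j' then (1 : 𝕜) else 0 else 0) = 0 := by
      intro u
      split_ifs with h h' <;> first | rfl | exact absurd (h.symm.trans h') hjj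
    simpa [bipartiteFrame, PiLp.inner_apply, Fintype.sum_sum_type, hdisjoint] using horth hjj

end

section

variable {𝕜 : Type} [RCLike 𝕜] {m n : ℕ}

theorem isFrameGraphIn_completeBipartiteGraph {d : ℕ} (hnm : n ≤ m) (hmd : m ≤ d)
    (hdn : d ≤ m + n) : IsFrameGraphIn 𝕜 (completeBipartiteGraph (Fin m) (Fin n)) d := by
  obtain ⟨a, ha, horth⟩ := exists_pairwise_orthogonal_ne_zero 𝕜 m
  have hdm : d - m ≤ n := by omega
  exact isFrameGraphIn_of_linearIsometryEquiv
    (LinearIsometryEquiv.piLpCongrLeft 2 𝕜 𝕜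
      (finSumFinEquiv.trans (finCongr (Nat.add_sub_cancel' hmd))))
    (span_range_bipartiteFrame (a ∘ Fin.castLE hnm) (Fin.castLE_injective hdm))
    (isFaithfulOrthogonalRep_bipartiteFrame (fun _ ↦ ha _)
      (horth.comp_of_injective (Fin.castLE_injective hnm)) _)

theorem isFrameGraphIn_completeBipartiteGraph_iff (hn : 1 ≤ n) (hnm : n ≤ m) (d : ℕ) :
    IsFrameGraphIn 𝕜 (completeBipartiteGraph (Fin m) (Fin n)) d ↔ m ≤ d ∧ d ≤ m + n := by
  refine ⟨fun h ↦ ⟨?_, by simpa using h.le_card⟩, fun h ↦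
    isFrameGraphIn_completeBipartiteGraph hnm h.1 h.2⟩
  simpa using h.card_le Sum.inl_injective (by simp) fun _ ↦ ⟨Sum.inr ⟨0, hn⟩, by simp⟩

theorem mrPlus_completeBipartiteGraph (hn : 1 ≤ n) (hnm : n ≤ m) :
    mrPlus 𝕜 (completeBipartiteGraph (Fin m) (Fin n)) = m := by
  obtain ⟨f, -, hf⟩ :=
    isFrameGraphIn_completeBipartiteGraph (𝕜 := 𝕜) hnm le_rfl (Nat.le_add_right m n)
  simpa using mrPlus_eq_finrank hf fun A hA hpat ↦ by
    simpa using card_le_rank_of_posSemidef hA hpat Sum.inl_injective (by simp)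
      fun _ ↦ ⟨Sum.inr ⟨0, hn⟩, by simp⟩

end

/-- for `m ≥ n ≥ 1`, `mr₊^ℝ(K_{m,n}) = mr₊^ℂ(K_{m,n}) = m`, and `K_{m,n}` is a
frame graph in a real (or complex) inner product space of dimension `d` iff `m ≤ d ≤ m + n`. -/
theorem mrPlus_completeBipartite (m n : ℕ) (hn : 1 ≤ n) (hmn : n ≤ m) :
    mrPlus ℝ (completeBipartiteGraph (Fin m) (Fin n)) = m ∧
    mrPlus ℂ (completeBipartiteGraph (Fin m) (Fin n)) = m ∧
    ∀ d : ℕ,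
      (IsFrameGraphIn ℝ (completeBipartiteGraph (Fin m) (Fin n)) d ↔ m ≤ d ∧ d ≤ m + n) ∧
      (IsFrameGraphIn ℂ (completeBipartiteGraph (Fin m) (Fin n)) d ↔ m ≤ d ∧ d ≤ m + n) :=
  ⟨mrPlus_completeBipartiteGraph hn hmn, mrPlus_completeBipartiteGraph hn hmn,
    fun d ↦ ⟨isFrameGraphIn_completeBipartiteGraph_iff hn hmn d,
      isFrameGraphIn_completeBipartiteGraph_iff hn hmn d⟩⟩
end

section
/- Let G be a connected graph on n ≥ 2 vertices and H a connected graph on m ≥ 2 vertices. Then max{n·OS(H), m·OS(G)} ≤ OS(G □ H), where G □ H is the Cartesian product of G and H. -/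
open scoped ComplexOrder

/-!
Let `w₀, …, w_{s-1}` be an OS-vertex set of `H` with witnesses `xᵢ`, and enumerate `G` as
`a₀, …, a_{n-1}`. In `G □ H` take the layers `(a₀, wᵢ), …, (a_{n-1}, wᵢ)` one after the other,
`i = 0, …, s-1`, and give `(a, wᵢ)` the witness `(a, xᵢ)`. A `G`-edge from `(a, xᵢ)` to an earlier
vertex would force `xᵢ = wⱼ` with `j ≤ i`; an `H`-edge stays in the fibre over `a`, where it lands
on some `wⱼ` with `j < i`, and projecting the component onto `H` shows that `wⱼ` lies in the
component of `wᵢ` among `w₀, …, wᵢ`, which `xᵢ` avoids. Commutativity of `□` gives the other bound.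
-/

open SimpleGraph

variable {V W : Type}

lemma SimpleGraph.Reachable.induce_of_map {A : SimpleGraph V} {B : SimpleGraph W}
    {S : Set V} {T : Set W} (f : V → W) (hST : Set.MapsTo f S T)
    (hf : ∀ x y, A.Adj x y → f x = f y ∨ B.Adj (f x) (f y)) {a b : S}
    (h : (A.induce S).Reachable a b) :
    (B.induce T).Reachable ⟨f a, hST a.2⟩ ⟨f b, hST b.2⟩ := by
  rw [reachable_iff_reflTransGen] at h ⊢
  refine h.lift' (fun x : S => (⟨f x, hST x.2⟩ : T)) fun x y hxy => ?_
  rcases hf x y hxy with heq | hadj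
  · have h : (⟨f x, hST x.2⟩ : T) = ⟨f y, hST y.2⟩ := Subtype.ext heq
    rw [Function.onFun, h]
  · exact .single hadj

lemma IsOSSet.map_iso {G : SimpleGraph V} {G' : SimpleGraph W} (e : G ≃g G') {s : ℕ}
    {v : Fin s → V} (hv : IsOSSet G v) : IsOSSet G' (e ∘ v) := by
  refine ⟨e.injective.comp hv.1, fun k => ?_⟩
  obtain ⟨x, hadj, hne, hfar⟩ := hv.2 k
  refine ⟨e x, e.map_adj_iff.2 hadj, fun l hl h => hne l hl (e.injective h),
    fun l hl hreach h => hfar l hl ?_ (e.map_adj_iff.1 h)⟩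
  simpa using hreach.induce_of_map e.symm
    (by rintro _ ⟨l', hl', rfl⟩; exact ⟨l', hl', by simp⟩)
    fun x y hxy => Or.inr (e.symm.map_adj_iff.2 hxy)

lemma SimpleGraph.Iso.osNumber_eq {G : SimpleGraph V} {G' : SimpleGraph W} (e : G ≃g G') :
    OSNumber G = OSNumber G' :=
  congrArg sSup <| Set.ext fun _ =>
    ⟨fun ⟨_, hv⟩ => ⟨_, hv.map_iso e⟩, fun ⟨_, hv⟩ => ⟨_, hv.map_iso e.symm⟩⟩

lemma bddAbove_osSetSizes [Finite V] (G : SimpleGraph V) :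
    BddAbove {s : ℕ | ∃ v : Fin s → V, IsOSSet G v} :=
  ⟨Nat.card V, fun s ⟨v, hv⟩ => by simpa using Nat.card_le_card_of_injective v hv.1⟩

lemma IsOSSet.le_osNumber [Finite V] {G : SimpleGraph V} {s : ℕ} {v : Fin s → V}
    (hv : IsOSSet G v) : s ≤ OSNumber G :=
  le_csSup (bddAbove_osSetSizes G) ⟨v, hv⟩

lemma exists_isOSSet_osNumber [Finite V] (G : SimpleGraph V) :
    ∃ v : Fin (OSNumber G) → V, IsOSSet G v :=
  Nat.sSup_mem (s := {s : ℕ | ∃ v : Fin s → V, IsOSSet G v})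
    ⟨0, finZeroElim, finZeroElim, finZeroElim⟩ (bddAbove_osSetSizes G)

lemma IsOSSet.boxProd_layers (G : SimpleGraph V) {H : SimpleGraph W} {n s : ℕ}
    {e : Fin n → V} (he : Function.Injective e) {w : Fin s → W} (hw : IsOSSet H w) :
    IsOSSet (G □ H) fun i : Fin (s * n) => (e i.modNat, w i.divNat) := by
  have layer_mono {l k : Fin (s * n)} (h : l ≤ k) : l.divNat ≤ k.divNat :=
    Nat.div_le_div_right h
  have eq_of_layer {l k : Fin (s * n)} (h₁ : l.divNat = k.divNat) (h₂ : l.modNat = k.modNat) :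
      l = k :=
    finProdFinEquiv.symm.injective (Prod.ext h₁ h₂)
  refine ⟨fun i j h => eq_of_layer (hw.1 (congrArg Prod.snd h)) (he (congrArg Prod.fst h)),
    fun k => ?_⟩
  obtain ⟨x, hadj, hne, hfar⟩ := hw.2 k.divNat
  refine ⟨(e k.modNat, x), boxProd_adj.2 (Or.inr ⟨hadj, rfl⟩),
    fun l hl h => hne _ (layer_mono hl) (congrArg Prod.snd h), fun l hl hreach h => ?_⟩
  rcases boxProd_adj.1 h with ⟨-, hx⟩ | ⟨hH, hG⟩
  · exact hne _ (layer_mono hl.le) hx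
  · have hlt : l.divNat < k.divNat :=
      (layer_mono hl.le).lt_of_ne fun h => hl.ne (eq_of_layer h (he hG).symm)
    refine hfar _ hlt ?_ hH
    exact hreach.induce_of_map Prod.snd
      (by rintro _ ⟨l', hl', rfl⟩; exact ⟨_, layer_mono hl', rfl⟩)
      fun a b hab => (boxProd_adj.1 hab).imp And.right And.left

lemma natCard_mul_osNumber_le_osNumber_boxProd [Finite V] [Finite W] (G : SimpleGraph V)
    (H : SimpleGraph W) : Nat.card V * OSNumber H ≤ OSNumber (G □ H) := by
  obtain ⟨w, hw⟩ := exists_isOSSet_osNumber H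
  rw [mul_comm]
  exact (hw.boxProd_layers G (Finite.equivFin V).symm.injective).le_osNumber

theorem osNumber_boxProd_lower_bound_general (n m : ℕ)
    (G : SimpleGraph (Fin n)) (H : SimpleGraph (Fin m)) :
    max (n * OSNumber H) (m * OSNumber G) ≤ OSNumber (G □ H) := by
  refine max_le ?_ ?_
  · simpa using natCard_mul_osNumber_le_osNumber_boxProd G H
  · simpa [(boxProdComm G H).osNumber_eq] using natCard_mul_osNumber_le_osNumber_boxProd H G

/-- `max {n·OS(H), m·OS(G)} ≤ OS(G □ H)` for connected graphs `G`, `H`. -/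
theorem osNumber_boxProd_lower_bound (n m : ℕ) (hn : 2 ≤ n) (hm : 2 ≤ m)
    (G : SimpleGraph (Fin n)) (H : SimpleGraph (Fin m))
    (hGc : G.Connected) (hHc : H.Connected) :
    max (n * OSNumber H) (m * OSNumber G) ≤ OSNumber (G □ H) :=
  osNumber_boxProd_lower_bound_general n m G H
end

section
/- Let G be a graph on n vertices and H a graph on m vertices (each with at least 2 vertices). Then mr_+^R(G □ H) ≤ m·mr_+^R(G) + n·mr_+^R(H) − mr_+^R(G)·mr_+^R(H). -/
open scoped ComplexOrder

/-!
If `A` and `B` are positive semidefinite realizations of `G` and `H` of minimum rank, the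
Kronecker sum `A ⊗ I + I ⊗ B` is a positive semidefinite realization of `G □ H`. Diagonalizing
`A` and `B` simultaneously diagonalizes it, with eigenvalues the sums `λᵢ + μₖ` of nonnegative
eigenvalues of `A` and `B`; such a sum vanishes only when both terms do, so the rank is
`nm - (n - rk A)(m - rk B) = m rk A + n rk B - rk A rk B`.
-/

open Matrix
open scoped Kronecker

theorem Fintype.card_subtype_prod_or_add_mul {α β : Type*} [Fintype α] [Fintype β]
    (p : α → Prop) (q : β → Prop) [DecidablePred p] [DecidablePred q] :
    card {x : α × β // p x.1 ∨ q x.2} + card {a // p a} * card {b // q b} =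
      card β * card {a // p a} + card α * card {b // q b} := by
  classical
  have hunion : Finset.univ.filter (fun x : α × β => p x.1 ∨ q x.2) =
      Finset.univ.filter p ×ˢ Finset.univ ∪ Finset.univ ×ˢ Finset.univ.filter q := by
    ext; simp
  have key := Finset.card_union_add_card_inter (Finset.univ.filter p ×ˢ (Finset.univ : Finset β))
    ((Finset.univ : Finset α) ×ˢ Finset.univ.filter q)
  rw [Finset.product_inter_product] at key
  simp only [Finset.inter_univ, Finset.univ_inter, Finset.card_product, Finset.card_univ] at key
  simp only [Fintype.card_subtype, hunion]
  linarith

namespace Matrix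

variable {R V W : Type*}

def kroneckerSum [DecidableEq V] [DecidableEq W] [Zero R] [One R] [Mul R] [Add R]
    (A : Matrix V V R) (B : Matrix W W R) : Matrix (V × W) (V × W) R :=
  A ⊗ₖ 1 + 1 ⊗ₖ B

def HasGraph [Zero R] (A : Matrix V V R) (G : SimpleGraph V) : Prop :=
  ∀ i j, i ≠ j → (A i j ≠ 0 ↔ G.Adj i j)

theorem rank_unitary_mul_mul_star [Fintype V] [DecidableEq V] [CommRing R] [StarRing R]
    (U : unitaryGroup V R) (D : Matrix V V R) :
    ((U : Matrix V V R) * D * star (U : Matrix V V R)).rank = D.rank := by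
  rw [← Unitary.coe_star, rank_mul_eq_left_of_isUnit_det _ _ (UnitaryGroup.det_isUnit _),
    rank_mul_eq_right_of_isUnit_det _ _ (UnitaryGroup.det_isUnit _)]

variable [DecidableEq V] [DecidableEq W]

theorem kroneckerSum_apply [Zero R] [One R] [Mul R] [Add R]
    (A : Matrix V V R) (B : Matrix W W R) (i j : V) (k l : W) :
    kroneckerSum A B (i, k) (j, l) =
      A i j * (1 : Matrix W W R) k l + (1 : Matrix V V R) i j * B k l :=
  rfl

theorem HasGraph.kroneckerSum [NonAssocSemiring R]
    {A : Matrix V V R} {B : Matrix W W R} {G : SimpleGraph V} {H : SimpleGraph W}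
    (hA : A.HasGraph G) (hB : B.HasGraph H) : (Matrix.kroneckerSum A B).HasGraph (G □ H) := by
  rintro ⟨i, k⟩ ⟨j, l⟩ hne
  rw [kroneckerSum_apply, SimpleGraph.boxProd_adj]
  by_cases hij : i = j
  · subst hij
    have hkl : k ≠ l := fun h => hne (by rw [h])
    simp [hkl, hB k l hkl]
  · by_cases hkl : k = l
    · subst hkl
      simp [hij, hA i j hij]
    · simp [hij, hkl]

section CommSemiring

variable [CommSemiring R]

theorem kroneckerSum_diagonal (d : V → R) (e : W → R) :
    kroneckerSum (diagonal d) (diagonal e) = diagonal fun p => d p.1 + e p.2 := by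
  rw [kroneckerSum, ← diagonal_one, ← diagonal_one, diagonal_kronecker_diagonal,
    diagonal_kronecker_diagonal, diagonal_add]
  simp

theorem kroneckerSum_conj_unitary [Fintype V] [Fintype W] [StarRing R]
    {U : Matrix V V R} {U' : Matrix W W R}
    (hU : U ∈ unitary (Matrix V V R)) (hU' : U' ∈ unitary (Matrix W W R))
    (D : Matrix V V R) (E : Matrix W W R) :
    kroneckerSum (U * D * star U) (U' * E * star U') =
      (U ⊗ₖ U') * kroneckerSum D E * star (U ⊗ₖ U') := by
  have hUU : U * 1 * star U = 1 := by rw [mul_one, Unitary.mul_star_self_of_mem hU]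
  have hUU' : U' * 1 * star U' = 1 := by rw [mul_one, Unitary.mul_star_self_of_mem hU']
  conv_lhs => rw [kroneckerSum, ← hUU, ← hUU']
  simp only [kroneckerSum, star_eq_conjTranspose, conjTranspose_kronecker, mul_add, add_mul,
    mul_kronecker_mul]

end CommSemiring

variable {𝕜 : Type*} [RCLike 𝕜] [Fintype V] [Fintype W]
  {A : Matrix V V 𝕜} {B : Matrix W W 𝕜}

theorem PosSemidef.kroneckerSum (hA : A.PosSemidef) (hB : B.PosSemidef) :
    (Matrix.kroneckerSum A B).PosSemidef :=
  (hA.kronecker .one).add (PosSemidef.one.kronecker hB)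

theorem IsHermitian.kroneckerSum_eq_conj_diagonal (hA : A.IsHermitian) (hB : B.IsHermitian) :
    kroneckerSum A B =
      ((hA.eigenvectorUnitary : Matrix V V 𝕜) ⊗ₖ hB.eigenvectorUnitary) *
        diagonal (fun p => ((hA.eigenvalues p.1 + hB.eigenvalues p.2 : ℝ) : 𝕜)) *
        star ((hA.eigenvectorUnitary : Matrix V V 𝕜) ⊗ₖ hB.eigenvectorUnitary) := by
  conv_lhs => rw [hA.spectral_theorem, hB.spectral_theorem]
  simp only [Unitary.conjStarAlgAut_apply]
  rw [kroneckerSum_conj_unitary hA.eigenvectorUnitary.2 hB.eigenvectorUnitary.2,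
    kroneckerSum_diagonal]
  simp

theorem PosSemidef.rank_kroneckerSum_add_mul (hA : A.PosSemidef) (hB : B.PosSemidef) :
    (Matrix.kroneckerSum A B).rank + A.rank * B.rank =
      Fintype.card W * A.rank + Fintype.card V * B.rank := by
  have hrank : (Matrix.kroneckerSum A B).rank =
      Fintype.card {p : V × W // hA.1.eigenvalues p.1 ≠ 0 ∨ hB.1.eigenvalues p.2 ≠ 0} := by
    rw [hA.1.kroneckerSum_eq_conj_diagonal hB.1,
      rank_unitary_mul_mul_star ⟨_, kronecker_mem_unitary hA.1.eigenvectorUnitary.2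
        hB.1.eigenvectorUnitary.2⟩, rank_diagonal]
    refine Fintype.card_congr (Equiv.subtypeEquivRight fun p => ?_)
    rw [Ne, RCLike.ofReal_eq_zero, add_eq_zero_iff_of_nonneg (hA.eigenvalues_nonneg _)
      (hB.eigenvalues_nonneg _), not_and_or]
  rw [hrank, hA.1.rank_eq_card_non_zero_eigs, hB.1.rank_eq_card_non_zero_eigs]
  simpa using Fintype.card_subtype_prod_or_add_mul (fun i => hA.1.eigenvalues i ≠ 0)
    (fun k => hB.1.eigenvalues k ≠ 0)

theorem PosSemidef.map_ofReal {A : Matrix V V ℝ} (hA : A.PosSemidef) :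
    (A.map (algebraMap ℝ 𝕜)).PosSemidef := by
  have hspec := hA.1.spectral_theorem
  rw [Unitary.conjStarAlgAut_apply] at hspec
  rw [hspec, Matrix.map_mul, Matrix.map_mul, diagonal_map (map_zero _), star_eq_conjTranspose,
    conjTranspose_map _ fun r => algebraMap_star_comm r]
  refine PosSemidef.mul_mul_conjTranspose_same (PosSemidef.diagonal fun i => ?_) _
  simpa using hA.eigenvalues_nonneg i

end Matrix

theorem SimpleGraph.hasGraph_lapMatrix {R V : Type*} [Ring R] [Nontrivial R] [Fintype V]
    [DecidableEq V] (G : SimpleGraph V) [DecidableRel G.Adj] : (G.lapMatrix R).HasGraph G := by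
  intro i j hij
  by_cases h : G.Adj i j <;>
    simp [h, SimpleGraph.lapMatrix, SimpleGraph.degMatrix, diagonal_apply_ne _ hij]

section

variable (𝕜 : Type) [RCLike 𝕜] {V W : Type} [Fintype V] [Fintype W] [DecidableEq V]
  [DecidableEq W]

theorem exists_posSemidef_hasGraph (G : SimpleGraph V) :
    ∃ A : Matrix V V 𝕜, A.PosSemidef ∧ A.HasGraph G := by
  classical
  refine ⟨(G.lapMatrix ℝ).map (algebraMap ℝ 𝕜), (G.posSemidef_lapMatrix ℝ).map_ofReal,
    fun i j hij => ?_⟩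
  rw [map_apply, Ne, map_eq_zero_iff _ (algebraMap ℝ 𝕜).injective]
  exact G.hasGraph_lapMatrix i j hij

theorem mrPlus_le_rank {G : SimpleGraph V} {A : Matrix V V 𝕜} (hA : A.PosSemidef)
    (hG : A.HasGraph G) : mrPlus 𝕜 G ≤ A.rank :=
  Nat.sInf_le ⟨A, hA, hG, rfl⟩

theorem exists_posSemidef_hasGraph_rank_eq_mrPlus (G : SimpleGraph V) :
    ∃ A : Matrix V V 𝕜, A.PosSemidef ∧ A.HasGraph G ∧ A.rank = mrPlus 𝕜 G := by
  obtain ⟨A, hA, hG⟩ := exists_posSemidef_hasGraph 𝕜 G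
  exact Nat.sInf_mem
    (s := {r | ∃ A : Matrix V V 𝕜, A.PosSemidef ∧ A.HasGraph G ∧ A.rank = r})
    ⟨_, A, hA, hG, rfl⟩

theorem mrPlus_boxProd_add_mul_le (G : SimpleGraph V) (H : SimpleGraph W) :
    mrPlus 𝕜 (G □ H) + mrPlus 𝕜 G * mrPlus 𝕜 H ≤
      Fintype.card W * mrPlus 𝕜 G + Fintype.card V * mrPlus 𝕜 H := by
  obtain ⟨A, hA, hAG, hArank⟩ := exists_posSemidef_hasGraph_rank_eq_mrPlus 𝕜 G
  obtain ⟨B, hB, hBH, hBrank⟩ := exists_posSemidef_hasGraph_rank_eq_mrPlus 𝕜 H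
  rw [← hArank, ← hBrank, ← hA.rank_kroneckerSum_add_mul hB]
  exact Nat.add_le_add_right (mrPlus_le_rank 𝕜 (hA.kroneckerSum hB) (hAG.kroneckerSum hBH)) _

end

theorem mrPlusReal_boxProd_upper_bound_general (n m : ℕ)
    (G : SimpleGraph (Fin n)) (H : SimpleGraph (Fin m)) :
    mrPlus ℝ (G □ H) ≤ m * mrPlus ℝ G + n * mrPlus ℝ H - mrPlus ℝ G * mrPlus ℝ H :=
  Nat.le_sub_of_add_le (by simpa using mrPlus_boxProd_add_mul_le ℝ G H)

/-- `mr₊^ℝ(G □ H) ≤ m·mr₊^ℝ(G) + n·mr₊^ℝ(H) − mr₊^ℝ(G)·mr₊^ℝ(H)`. -/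
theorem mrPlusReal_boxProd_upper_bound (n m : ℕ) (hn : 2 ≤ n) (hm : 2 ≤ m)
    (G : SimpleGraph (Fin n)) (H : SimpleGraph (Fin m)) :
    mrPlus ℝ (G □ H) ≤ m * mrPlus ℝ G + n * mrPlus ℝ H - mrPlus ℝ G * mrPlus ℝ H :=
  mrPlusReal_boxProd_upper_bound_general n m G H
end

section
/- For all n, m ≥ 2, n + m − 2 ≤ mr_+^R(K_n □ K_m) ≤ n + m − 1; that is, the real minimum positive semidefinite rank of the Cartesian product K_n □ K_m is either n + m − 2 or n + m − 1. -/
open scoped ComplexOrder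

/-!
A positive semidefinite matrix with the off-diagonal pattern of `G` is the Gram matrix of a
faithful orthogonal representation of `G`, and its rank is the dimension spanned by the vectors.
For `K_n □ K_m` the vectors `e_i + f_j ∈ ℝ^(n+m)` form such a representation inside the
hyperplane orthogonal to `∑ e_i - ∑ f_j`, so the rank can be `n + m - 1`. Conversely, in any
representation the vectors on a cross `{(i, b) | i ≠ a} ∪ {(a, j) | j ≠ b}` are linearly
independent: the two arms are mutually orthogonal, and on an arm the vector at `(i, b)` is the
only one not orthogonal to the vector at `(i, b')`.
-/

open Matrix Module InnerProductSpace

namespace Matrix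

variable {𝕜 : Type*} [RCLike 𝕜] {n : Type*} [Fintype n]

theorem PosSemidef.exists_gram_eq {A : Matrix n n 𝕜} (hA : A.PosSemidef) :
    ∃ v : n → EuclideanSpace 𝕜 n, gram 𝕜 v = A := by
  classical
  open scoped MatrixOrder in
  obtain ⟨B, rfl⟩ := CStarAlgebra.nonneg_iff_eq_star_mul_self.mp hA.nonneg
  refine ⟨fun j => WithLp.toLp 2 (B.col j), ?_⟩
  rw [gram_eq_conjTranspose_mul (EuclideanSpace.basisFun n 𝕜)]
  rfl

theorem rank_gram {E : Type*} [NormedAddCommGroup E] [InnerProductSpace 𝕜 E]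
    [FiniteDimensional 𝕜 E] (v : n → E) :
    (gram 𝕜 v).rank = finrank 𝕜 (Submodule.span 𝕜 (Set.range v)) := by
  set b := stdOrthonormalBasis 𝕜 E
  let e : E ≃ₗ[𝕜] (Fin (finrank 𝕜 E) → 𝕜) :=
    b.repr.toLinearEquiv.trans (WithLp.linearEquiv 2 𝕜 _)
  rw [gram_eq_conjTranspose_mul b, rank_conjTranspose_mul_self, rank_eq_finrank_span_cols,
    ← LinearEquiv.finrank_map_eq e, Submodule.map_span, ← Set.range_comp]
  rfl

end Matrix

/-- Lovász's faithful orthogonal representations: their Gram matrices are exactly the matrices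
in the definition of `mrPlus`. -/
def SimpleGraph.IsOrthogonalRepresentation (𝕜 : Type*) {V E : Type*} [Zero 𝕜] [Inner 𝕜 E]
    (G : SimpleGraph V) (c : V → E) : Prop :=
  ∀ i j, i ≠ j → (⟪c i, c j⟫_𝕜 ≠ 0 ↔ G.Adj i j)

section InnerProductSpace

variable {𝕜 : Type*} [RCLike 𝕜] {E : Type*} [NormedAddCommGroup E] [InnerProductSpace 𝕜 E]

theorem linearIndependent_of_biorthogonal {ι : Type*} {f w : ι → E}
    (hdiag : ∀ i, ⟪w i, f i⟫_𝕜 ≠ 0) (hoff : ∀ i j, i ≠ j → ⟪w i, f j⟫_𝕜 = 0) :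
    LinearIndependent 𝕜 f := by
  classical
  rw [linearIndependent_iff']
  intro s g hg i hi
  have h := congrArg (inner 𝕜 (w i)) hg
  rw [inner_zero_right, inner_sum, Finset.sum_eq_single i
    (fun j _ hji => by rw [inner_smul_right, hoff i j hji.symm, mul_zero])
    (fun h => absurd hi h), inner_smul_right] at h
  exact (mul_eq_zero.mp h).resolve_right (hdiag i)

theorem LinearIndependent.sum_elim_of_inner_eq_zero {ι ι' : Type*} {f : ι → E} {g : ι' → E}
    (hf : LinearIndependent 𝕜 f) (hg : LinearIndependent 𝕜 g)
    (h : ∀ i j, ⟪f i, g j⟫_𝕜 = 0) : LinearIndependent 𝕜 (Sum.elim f g) :=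
  hf.sum_type hg <| Submodule.IsOrtho.disjoint <| Submodule.isOrtho_span.mpr <| by
    rintro _ ⟨i, rfl⟩ _ ⟨j, rfl⟩
    exact h i j

end InnerProductSpace

section mrPlus

variable {𝕜 : Type} [RCLike 𝕜] {V : Type} [Fintype V] [DecidableEq V]
  {E : Type*} [NormedAddCommGroup E] [InnerProductSpace 𝕜 E] {G : SimpleGraph V}

theorem mrPlus_le_finrank_span [FiniteDimensional 𝕜 E] {c : V → E}
    (hc : G.IsOrthogonalRepresentation 𝕜 c) :
    mrPlus 𝕜 G ≤ finrank 𝕜 (Submodule.span 𝕜 (Set.range c)) :=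
  Nat.sInf_le ⟨gram 𝕜 c, posSemidef_gram 𝕜 c, hc, rank_gram c⟩

theorem le_mrPlus {r : ℕ} {c₀ : V → E} (hc₀ : G.IsOrthogonalRepresentation 𝕜 c₀)
    (h : ∀ c : V → EuclideanSpace 𝕜 V, G.IsOrthogonalRepresentation 𝕜 c →
      r ≤ finrank 𝕜 (Submodule.span 𝕜 (Set.range c))) :
    r ≤ mrPlus 𝕜 G := by
  refine le_csInf ⟨_, gram 𝕜 c₀, posSemidef_gram 𝕜 c₀, hc₀, rfl⟩ ?_
  rintro _ ⟨A, hA, hpat, rfl⟩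
  obtain ⟨c, rfl⟩ := hA.exists_gram_eq
  rw [rank_gram]
  exact h c hpat

end mrPlus

namespace SimpleGraph

variable {α β : Type*}

theorem top_boxProd_top_adj {x y : α × β} :
    ((⊤ : SimpleGraph α) □ (⊤ : SimpleGraph β)).Adj x y ↔ x ≠ y ∧ (x.1 = y.1 ∨ x.2 = y.2) := by
  simp only [boxProd_adj, top_adj, Ne, Prod.ext_iff]
  tauto

variable {𝕜 : Type*} [RCLike 𝕜] {E : Type*} [NormedAddCommGroup E] [InnerProductSpace 𝕜 E]

variable [Fintype α] [Fintype β]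

theorem card_add_card_sub_two_le_finrank_span [Nontrivial α] [Nontrivial β] {c : α × β → E}
    (hc : ((⊤ : SimpleGraph α) □ (⊤ : SimpleGraph β)).IsOrthogonalRepresentation 𝕜 c) :
    Fintype.card α + Fintype.card β - 2 ≤ finrank 𝕜 (Submodule.span 𝕜 (Set.range c)) := by
  classical
  have inner_eq_zero {x y : α × β} (h₁ : x.1 ≠ y.1) (h₂ : x.2 ≠ y.2) :
      ⟪c x, c y⟫_𝕜 = 0 := by
    by_contra h
    have := ((hc x y fun hxy => h₁ (congrArg Prod.fst hxy)).mp h)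
    rw [top_boxProd_top_adj] at this
    tauto
  have inner_ne_zero {x y : α × β} (hxy : x ≠ y) (h : x.1 = y.1 ∨ x.2 = y.2) :
      ⟪c x, c y⟫_𝕜 ≠ 0 :=
    (hc x y hxy).mpr (top_boxProd_top_adj.mpr ⟨hxy, h⟩)
  obtain ⟨a', a, ha'⟩ := exists_pair_ne α
  obtain ⟨b', b, hb'⟩ := exists_pair_ne β
  let row (i : {i // i ≠ a}) : E := c (i, b)
  let col (j : {j // j ≠ b}) : E := c (a, j)
  have hrow : LinearIndependent 𝕜 row :=
    linearIndependent_of_biorthogonal (w := fun i => c (i, b'))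
      (fun i => inner_ne_zero (by simp [hb']) (Or.inl rfl))
      (fun i j hij => inner_eq_zero (Subtype.coe_ne_coe.mpr hij) hb')
  have hcol : LinearIndependent 𝕜 col :=
    linearIndependent_of_biorthogonal (w := fun j => c (a', j))
      (fun j => inner_ne_zero (by simp [ha']) (Or.inr rfl))
      (fun i j hij => inner_eq_zero ha' (Subtype.coe_ne_coe.mpr hij))
  have hcross := hrow.sum_elim_of_inner_eq_zero hcol fun i j => inner_eq_zero i.2 (Ne.symm j.2)
  calc Fintype.card α + Fintype.card β - 2
      = Fintype.card ({i // i ≠ a} ⊕ {j // j ≠ b}) := by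
        simp only [Fintype.card_sum, Fintype.card_subtype_compl, Fintype.card_unique]
        have := Fintype.card_pos (α := α); have := Fintype.card_pos (α := β)
        omega
    _ = finrank 𝕜 (Submodule.span 𝕜 (Set.range (Sum.elim row col))) :=
        (finrank_span_eq_card hcross).symm
    _ ≤ finrank 𝕜 (Submodule.span 𝕜 (Set.range c)) := by
        have := FiniteDimensional.span_of_finite 𝕜 (Set.finite_range c)
        refine Submodule.finrank_mono (Submodule.span_mono ?_)
        rintro _ ⟨i | j, rfl⟩
        exacts [⟨_, rfl⟩, ⟨_, rfl⟩]

variable [DecidableEq α] [DecidableEq β] (𝕜)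

noncomputable def topBoxProdTopRep (x : α × β) : EuclideanSpace 𝕜 (α ⊕ β) :=
  EuclideanSpace.single (Sum.inl x.1) 1 + EuclideanSpace.single (Sum.inr x.2) 1

theorem inner_topBoxProdTopRep (x y : α × β) :
    ⟪topBoxProdTopRep 𝕜 x, topBoxProdTopRep 𝕜 y⟫_𝕜 =
      (if x.1 = y.1 then 1 else 0) + (if x.2 = y.2 then 1 else 0) := by
  simp [topBoxProdTopRep, inner_add_left, inner_add_right, EuclideanSpace.inner_single_left,
    eq_comm]

theorem isOrthogonalRepresentation_topBoxProdTopRep :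
    ((⊤ : SimpleGraph α) □ (⊤ : SimpleGraph β)).IsOrthogonalRepresentation 𝕜
      (topBoxProdTopRep 𝕜) := by
  intro x y hxy
  rw [inner_topBoxProdTopRep, top_boxProd_top_adj]
  by_cases h₁ : x.1 = y.1 <;> by_cases h₂ : x.2 = y.2 <;> simp [h₁, h₂, hxy]

theorem finrank_span_topBoxProdTopRep_le [Nonempty α] :
    finrank 𝕜 (Submodule.span 𝕜 (Set.range (topBoxProdTopRep (α := α) (β := β) 𝕜))) ≤
      Fintype.card α + Fintype.card β - 1 := by
  let u : EuclideanSpace 𝕜 (α ⊕ β) :=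
    ∑ i, EuclideanSpace.single (Sum.inl i) 1 - ∑ j, EuclideanSpace.single (Sum.inr j) 1
  have hu : u ≠ 0 := by
    obtain ⟨a⟩ := ‹Nonempty α›
    intro h
    have := congrArg (· (Sum.inl a)) h
    simp [u, Pi.single_apply] at this
  have hspan : Submodule.span 𝕜 (Set.range (topBoxProdTopRep 𝕜)) ≤ (𝕜 ∙ u)ᗮ := by
    rw [Submodule.span_le]
    rintro _ ⟨x, rfl⟩
    rw [SetLike.mem_coe, Submodule.mem_orthogonal_singleton_iff_inner_right]
    simp [u, topBoxProdTopRep, inner_add_right, inner_sub_left, sum_inner,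
      EuclideanSpace.inner_single_left]
  have hcompl := (𝕜 ∙ u).finrank_add_finrank_orthogonal
  rw [finrank_span_singleton hu, finrank_euclideanSpace, Fintype.card_sum] at hcompl
  exact (Submodule.finrank_mono hspan).trans (by omega)

end SimpleGraph

/-- `n + m − 2 ≤ mr₊^ℝ(K_n □ K_m) ≤ n + m − 1`. -/
theorem mrPlusReal_complete_boxProd_complete (n m : ℕ) (hn : 2 ≤ n) (hm : 2 ≤ m) :
    n + m - 2 ≤ mrPlus ℝ ((⊤ : SimpleGraph (Fin n)) □ (⊤ : SimpleGraph (Fin m))) ∧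
    mrPlus ℝ ((⊤ : SimpleGraph (Fin n)) □ (⊤ : SimpleGraph (Fin m))) ≤ n + m - 1 := by
  have : Nontrivial (Fin n) := Fin.nontrivial_iff_two_le.mpr hn
  have : Nontrivial (Fin m) := Fin.nontrivial_iff_two_le.mpr hm
  have hrep :=
    SimpleGraph.isOrthogonalRepresentation_topBoxProdTopRep (α := Fin n) (β := Fin m) ℝ
  constructor
  · refine le_mrPlus hrep fun c hc => ?_
    simpa using SimpleGraph.card_add_card_sub_two_le_finrank_span hc
  · simpa using
      (mrPlus_le_finrank_span hrep).trans (SimpleGraph.finrank_span_topBoxProdTopRep_le ℝ)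
end
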